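/- Let 𝒳 be a class of left R-modules that is self-orthogonal (Ext¹_R(X, X') = 0 for all X, X' ∈ 𝒳) and closed under arbitrary direct sums. Then any module X admitting an 𝒳-filtration (Xα | α ≤ κ) is isomorphic to the direct sum ⊕_{α<κ} (X_{α+1}/X_α) of the consecutive quotients; in particular, 𝒳 is closed under transfinite extensions. -/

import Mathlib

open CategoryTheory CategoryTheory.Limits

set_option autoImplicit false

universe u

variable {R : Type u} [Ring R]

/-- A short exact sequence of `R`-modules encoded by two linear maps. -/
def IsSES {A B C : ModuleCat.{u} R} (f : A →ₗ[R] B) (g : B →ₗ[R] C) : Prop :=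
  Function.Injective f ∧ Function.Exact f g ∧ Function.Surjective g

/-- Vanishing of `Ext^n_R(A, B)` (computed in the abelian category of `R`-modules). -/
def extZero (n : ℕ) (A B : ModuleCat.{u} R) : Prop :=
  Limits.IsZero (((Ext ℤ (ModuleCat.{u} R) n).obj (Opposite.op A)).obj B)

/-- A continuous well-ordered filtration of `M` indexed by ordinals `≤ len`. -/
structure ModFiltration (M : ModuleCat.{u} R) where
  len : Ordinal.{u}
  F : Ordinal.{u} → Submodule R M
  mono : Monotone F
  bot : F 0 = ⊥
  top : F len = ⊤
  limit : ∀ o, o ≤ len → Order.IsSuccLimit o → F o = ⨆ b < o, F b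

/-- The consecutive quotient `F(o+1)/F(o)` of a filtration. -/
noncomputable def ModFiltration.quot {M : ModuleCat.{u} R} (fl : ModFiltration M)
    (o : Ordinal.{u}) : ModuleCat.{u} R :=
  ModuleCat.of R (fl.F (o + 1) ⧸ Submodule.comap (fl.F (o + 1)).subtype (fl.F o))

open DirectSum

/-!
By transfinite induction every `F α` with `α < κ` lies in `𝒳`: if all `F β`, `β < α`, do, then
`Ext¹(F (β+1) / F β, F β) = 0` splits each inclusion `F β ⊆ F (β+1)` with a complement
`C β ≅ F (β+1) / F β`, and continuity of the filtration makes `F α` the internal direct sum of the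
`C β`, `β < α`, hence isomorphic to `⨁_{β<α} F (β+1) / F β ∈ 𝒳`. The same decomposition at
`α = κ` gives the theorem.
-/

lemma CategoryTheory.ProjectiveResolution.exists_d_comp_eq_of_extZero {Q A : ModuleCat.{u} R}
    (P : ProjectiveResolution Q) (h : extZero 1 Q A) (u : P.complex.X 1 ⟶ A)
    (hu : P.complex.d 2 1 ≫ u = 0) : ∃ v : P.complex.X 0 ⟶ A, P.complex.d 1 0 ≫ v = u := by
  let K := P.complex.linearYonedaObj ℤ A
  have hK : (K.sc' 0 1 2).Exact := by
    rw [← HomologicalComplex.exactAt_iff' K 0 1 2 (by simp) (by simp),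
      HomologicalComplex.exactAt_iff_isZero_homology]
    exact h.of_iso (P.isoExt 1 A).symm
  exact (ShortComplex.moduleCat_exact_iff _).1 hK u hu

lemma CategoryTheory.ShortComplex.ShortExact.exists_comp_eq_id_of_extZero
    {S : ShortComplex (ModuleCat.{u} R)} (hS : S.ShortExact) (h : extZero 1 S.X₃ S.X₁) :
    ∃ s : S.X₃ ⟶ S.X₂, s ≫ S.g = 𝟙 S.X₃ := by
  have := hS.mono_f
  have := hS.epi_g
  let P : ProjectiveResolution S.X₃ := (HasProjectiveResolution.out (Z := S.X₃)).some
  let π : P.complex.X 0 ⟶ S.X₃ := P.π.f 0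
  let d := P.complex.d 1 0
  let l : P.complex.X 0 ⟶ S.X₂ := Projective.factorThru π S.g
  have hl : l ≫ S.g = π := Projective.factorThru_comp π S.g
  -- `d ≫ l` is a 1-cocycle with values in `S.X₁`, hence a coboundary `d ≫ v`
  let k : P.complex.X 1 ⟶ S.X₁ := hS.exact.lift (d ≫ l) (by
    rw [Category.assoc, hl]; exact P.complex_d_comp_π_f_zero)
  have hk : k ≫ S.f = d ≫ l := hS.exact.lift_f _ _
  obtain ⟨v, hv⟩ := P.exists_d_comp_eq_of_extZero h k (by
    rw [← cancel_mono S.f, Category.assoc, hk, zero_comp, ← Category.assoc,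
      P.complex.d_comp_d, zero_comp])
  obtain ⟨s, hs⟩ := CokernelCofork.IsColimit.desc' P.isColimitCokernelCofork (l - v ≫ S.f) (by
    rw [Preadditive.comp_sub, ← Category.assoc, hv, hk, sub_self])
  have : Epi π := inferInstanceAs (Epi (P.π.f 0))
  refine ⟨s, (cancel_epi π).1 ?_⟩
  calc π ≫ s ≫ S.g = (l - v ≫ S.f) ≫ S.g := by rw [← hs]; rfl
    _ = π ≫ 𝟙 _ := by simp [hl]

lemma extZero_of_iso_right {n : ℕ} {A B B' : ModuleCat.{u} R} (h : extZero n A B) (e : B ≅ B') :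
    extZero n A B' :=
  h.of_iso (((Ext ℤ (ModuleCat.{u} R) n).obj (Opposite.op A)).mapIso e.symm)

lemma Submodule.exists_isCompl_of_extZero {P : Type u} [AddCommGroup P] [Module R P]
    (N : Submodule R P) (h : extZero 1 (ModuleCat.of R (P ⧸ N)) (ModuleCat.of R N)) :
    ∃ C : Submodule R P, IsCompl N C := by
  let S := ModuleCat.shortComplexOfCompEqZero N.subtype N.mkQ (by ext; simp)
  have hS : S.ShortExact := ModuleCat.shortComplex_shortExact S
    (LinearMap.exact_subtype_mkQ N) N.injective_subtype N.mkQ_surjective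
  obtain ⟨s, hs⟩ := hS.exists_comp_eq_id_of_extZero h
  have hs' : N.mkQ ∘ₗ s.hom = LinearMap.id := congrArg ModuleCat.Hom.hom hs
  have hidem : IsIdempotentElem (s.hom ∘ₗ N.mkQ) := by
    change s.hom ∘ₗ (N.mkQ ∘ₗ s.hom) ∘ₗ N.mkQ = s.hom ∘ₗ N.mkQ
    rw [hs']; rfl
  have hker : LinearMap.ker (s.hom ∘ₗ N.mkQ) = N := by
    rw [LinearMap.ker_comp, LinearMap.ker_eq_bot_of_inverse hs', Submodule.comap_bot,
      Submodule.ker_mkQ]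
  exact ⟨_, hker ▸ (LinearMap.IsIdempotentElem.isCompl hidem).symm⟩

lemma Submodule.exists_disjoint_sup_eq_of_extZero {M : Type u} [AddCommGroup M] [Module R M]
    {N P : Submodule R M} (hNP : N ≤ P)
    (h : extZero 1 (ModuleCat.of R (P ⧸ N.comap P.subtype)) (ModuleCat.of R N)) :
    ∃ C : Submodule R M, Disjoint N C ∧ N ⊔ C = P ∧
      Nonempty (C ≃ₗ[R] P ⧸ N.comap P.subtype) := by
  obtain ⟨C, hC⟩ := (N.comap P.subtype).exists_isCompl_of_extZero
    (extZero_of_iso_right h (Submodule.comapSubtypeEquivOfLe hNP).symm.toModuleIso)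
  have hN : (N.comap P.subtype).map P.subtype = N := by
    rwa [Submodule.map_comap_subtype, inf_eq_right]
  refine ⟨C.map P.subtype, ?_, ?_, ⟨?_⟩⟩
  · exact hN ▸ Submodule.disjoint_map P.injective_subtype hC.disjoint
  · rw [← hN, ← Submodule.map_sup, hC.sup_eq_top, Submodule.map_top, Submodule.range_subtype]
  · exact (C.equivMapOfInjective _ P.injective_subtype).symm ≪≫ₗ
      (Submodule.quotientEquivOfIsCompl _ C hC).symm

lemma iSupIndep_of_disjoint_biSup_lt {α ι : Type*} [CompleteLattice α] [IsModularLattice α]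
    [IsCompactlyGenerated α] [LinearOrder ι] {C : ι → α}
    (h : ∀ i, Disjoint (C i) (⨆ j < i, C j)) : iSupIndep C := by
  classical
  rw [iSupIndep_iff_supIndep]
  intro s
  induction s using Finset.induction_on_max with
  | empty => exact Finset.supIndep_empty C
  | insert i s hlt hs =>
    exact hs.insert <| (h i).mono_right <| Finset.sup_le fun j hj => le_biSup C (hlt j hj)

namespace ModFiltration

variable {M : ModuleCat.{u} R} (fl : ModFiltration M)

def IsStepComplement (o : Ordinal.{u}) (C : Submodule R M) : Prop :=
  Disjoint (fl.F o) C ∧ fl.F o ⊔ C = fl.F (o + 1) ∧ Nonempty (C ≃ₗ[R] fl.quot o)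

variable {fl}

lemma F_eq_biSup_of_isStepComplement {C : Ordinal.{u} → Submodule R M} {δ : Ordinal.{u}}
    (hδ : δ ≤ fl.len) (hC : ∀ o < δ, fl.IsStepComplement o (C o)) :
    fl.F δ = ⨆ o < δ, C o := by
  refine le_antisymm ?_ (iSup₂_le fun o ho => ?_)
  · suffices ∀ α ≤ δ, fl.F α ≤ ⨆ o < α, C o from this δ le_rfl
    intro α
    induction α using Ordinal.limitRecOn with
    | zero => simp [fl.bot]
    | add_one α ih =>
      intro hα
      have hαδ : α < δ := Order.add_one_le_iff.1 hα
      have hαα : α < α + 1 := Order.lt_add_one_iff.2 le_rfl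
      rw [← (hC α hαδ).2.1]
      exact sup_le ((ih hαδ.le).trans (biSup_mono fun o ho => ho.trans hαα)) (le_biSup C hαα)
    | limit α hlim ih =>
      intro hα
      rw [fl.limit α (hα.trans hδ) hlim]
      exact iSup₂_le fun β hβ => (ih β hβ (hβ.le.trans hα)).trans
        (biSup_mono fun o ho => ho.trans hβ)
  · exact (le_sup_right.trans (hC o ho).2.1.le).trans (fl.mono (Order.add_one_le_of_lt ho))

lemma nonempty_linearEquiv_directSum {δ : Ordinal.{u}} (hδ : δ ≤ fl.len)
    (h : ∀ o < δ, ∃ C, fl.IsStepComplement o C) :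
    Nonempty
      (fl.F δ ≃ₗ[R] ⨁ i : δ.ToType, fl.quot ((Ordinal.ToType.mk (o := δ)).symm i).1) := by
  choose! C hC using h
  let ord : δ.ToType ≃o Set.Iio δ := Ordinal.ToType.mk.symm
  have hindep : iSupIndep fun i => C (ord i) := by
    refine iSupIndep_of_disjoint_biSup_lt fun i => (hC _ (ord i).2).1.symm.mono_right ?_
    rw [F_eq_biSup_of_isStepComplement ((ord i).2.le.trans hδ)
      fun o ho => hC o (ho.trans (ord i).2)]
    exact iSup₂_le fun j hj => le_biSup C (ord.lt_iff_lt.2 hj)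
  have hsup : ⨆ i, C (ord i) = fl.F δ := by
    rw [F_eq_biSup_of_isStepComplement hδ hC]
    refine le_antisymm (iSup_le fun i => le_biSup C (ord i).2) (iSup₂_le fun o ho => ?_)
    simpa using le_iSup (fun i => C (ord i)) (ord.symm ⟨o, ho⟩)
  exact ⟨(LinearEquiv.ofEq _ _ hsup.symm ≪≫ₗ
    LinearEquiv.ofEq _ _ DirectSum.range_coeLinearMap.symm ≪≫ₗ
    (LinearEquiv.ofInjective _ hindep.dfinsupp_lsum_injective).symm) ≪≫ₗ
    DFinsupp.mapRange.linearEquiv fun i => (hC _ (ord i).2).2.2.some⟩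

end ModFiltration

theorem statement4 (𝒳 : ModuleCat.{u} R → Prop)
    (horth : ∀ A B : ModuleCat.{u} R, 𝒳 A → 𝒳 B → extZero 1 A B)
    (hsum : ∀ (ι : Type u) (f : ι → ModuleCat.{u} R), (∀ i, 𝒳 (f i)) →
      𝒳 (ModuleCat.of R (⨁ i, f i)))
    (hiso : ∀ A B : ModuleCat.{u} R, 𝒳 A → (A ≃ₗ[R] B) → 𝒳 B)
    (M : ModuleCat.{u} R) (fl : ModFiltration M) (hq : ∀ o < fl.len, 𝒳 (fl.quot o)) :
    Nonempty ((M : Type u) ≃ₗ[R]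
      ⨁ i : fl.len.ToType, fl.quot ((Ordinal.ToType.mk (o := fl.len)).symm i).1) ∧
    𝒳 M := by
  have hsplit (o : Ordinal.{u}) (ho : o < fl.len) (hF : 𝒳 (ModuleCat.of R (fl.F o))) :
      ∃ C, fl.IsStepComplement o C :=
    Submodule.exists_disjoint_sup_eq_of_extZero (fl.mono le_self_add) (horth _ _ (hq o ho) hF)
  have hsumX (δ : Ordinal.{u}) (hδ : δ ≤ fl.len) : 𝒳 (ModuleCat.of R
      (⨁ i : δ.ToType, fl.quot ((Ordinal.ToType.mk (o := δ)).symm i).1)) :=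
    hsum _ _ fun i => hq _ ((Ordinal.ToType.mk.symm i).2.trans_le hδ)
  have hX : ∀ o < fl.len, 𝒳 (ModuleCat.of R (fl.F o)) := by
    intro o
    induction o using WellFoundedLT.induction with
    | _ o ih =>
      intro ho
      obtain ⟨e⟩ := ModFiltration.nonempty_linearEquiv_directSum ho.le
        fun β hβ => hsplit β (hβ.trans ho) (ih β hβ (hβ.trans ho))
      exact hiso _ _ (hsumX o ho.le) e.symm
  obtain ⟨e⟩ := ModFiltration.nonempty_linearEquiv_directSum le_rfl
    fun o ho => hsplit o ho (hX o ho)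
  let eM : (M : Type u) ≃ₗ[R] _ :=
    Submodule.topEquiv.symm ≪≫ₗ LinearEquiv.ofEq _ _ fl.top.symm ≪≫ₗ e
  exact ⟨⟨eM⟩, hiso _ _ (hsumX _ le_rfl) eM.symm⟩
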